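/- Let p ≥ 2 and α be positive integers, fix parameters r_0 = 1, r_1, …, r_{p+1} with r_{e−1} dividing r_e for each e, and let S ⊆ {0,1}^α be a finite set. For every d with 2 ≤ d ≤ p there exists an injective map ι : C_E^{(d−1)} → C_E^{(d)} such that every {x,y} ∈ C_E^{(d−1)} is mapped to ι({x,y}) = {(v,x), (v,y)} for some vector v ∈ {0,1}^{α_{d−1} − α_d} depending on {x,y}; moreover h_{d−1}(ι({x,y})) = {x,y}, i.e. h_{d−1} ∘ ι is the identity map on C_E^{(d−1)}. In particular |C_E^{(d−1)}| ≤ |C_E^{(d)}|. -/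

import Mathlib

/-!
Coloring machinery of Conlon–Fox–Lee–Sudakov. Vectors in `{0,1}^α` are modelled as
`Bool` lists of length `α`. Fix block lengths `r 0 = 1, r 1, …` with `r d ∣ r (d+1)`.
-/

/-- The blocks of resolution with block length `r`: split a vector into consecutive
blocks of length `r` (the last block may be shorter). -/
def blocksOf (r : ℕ) (v : List Bool) : List (List Bool) := v.toChunks r

/-- The function `η_d` (with `r = r_d`): records the position `i` of the first pair of
differing blocks of resolution `d` together with the unordered pair `{v_i, w_i}` of
these blocks; it takes the value `none` (playing the role of `0`) when `v = w`. -/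
def eta (r : ℕ) (v w : List Bool) : Option (ℕ × Sym2 (List Bool)) :=
  ((((blocksOf r v).zip (blocksOf r w)).zipIdx.map Prod.swap).find? (fun q => q.2.1 != q.2.2)).map
    (fun q => (q.1, s(q.2.1, q.2.2)))

/-- The function `ξ_d`: apply `η_d` to each corresponding pair of blocks of
resolution `d+1`. -/
def xi (r : ℕ → ℕ) (d : ℕ) (v w : List Bool) : List (Option (ℕ × Sym2 (List Bool))) :=
  ((blocksOf (r (d+1)) v).zip (blocksOf (r (d+1)) w)).map fun q => eta (r d) q.1 q.2

/-- The type of colors used by the coloring `c_p`. -/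
abbrev EGColor := List (List (Option (ℕ × Sym2 (List Bool))))

instance : DecidableEq (List (Option (ℕ × Sym2 (List Bool)))) := instDecidableEqList
instance : DecidableEq EGColor := instDecidableEqList

/-- The coloring `c_p (v,w) = (ξ_p(v,w), ξ_{p-1}(v,w), …, ξ_0(v,w))`. -/
def cColor (r : ℕ → ℕ) (p : ℕ) (v w : List Bool) : EGColor :=
  (List.range (p+1)).map fun j => xi r (p - j) v w

/-- The set of colors appearing under `c_p` on (unordered) pairs of distinct
elements of `S`. -/
def colorsOn (r : ℕ → ℕ) (p : ℕ) (S : Finset (List Bool)) : Finset EGColor :=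
  ((S ×ˢ S).filter fun q => q.1 ≠ q.2).image fun q => cColor r p q.1 q.2

/-- The vertex set `{0,1}^α`, realized as the set of all `Bool` lists of length `α`. -/
def allVecs (α : ℕ) : Finset (List Bool) :=
  Finset.univ.image fun v : Fin α → Bool => List.ofFn v

/-- `alphaD rd α`: the largest multiple of `rd` that is strictly less than `α`
(for `α, rd ≥ 1`). -/
def alphaD (rd α : ℕ) : ℕ := rd * ((α - 1) / rd)

/-- The set `C_E^{(d)}` of emerging colors of `S` at resolution `d`: the unordered pairs
`{v'', w''}` of final segments of elements `v = (v', v'')`, `w = (w', w'')` of `S`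
(split at `α_d`) with `v' = w'` and `v'' ≠ w''`. -/
def CEset (r : ℕ → ℕ) (α : ℕ) (S : Finset (List Bool)) (d : ℕ) : Finset (Sym2 (List Bool)) :=
  ((S ×ˢ S).filter fun q =>
      q.1.take (alphaD (r d) α) = q.2.take (alphaD (r d) α) ∧
      q.1.drop (alphaD (r d) α) ≠ q.2.drop (alphaD (r d) α)).image
    fun q => s(q.1.drop (alphaD (r d) α), q.2.drop (alphaD (r d) α))

/-- The set `C_I^{(d)}` of inherited colors of `S` at resolution `d`: the pairs
`(c_p(v', w'), η_{d-1}(v'', w''))` over elements `v = (v', v'')`, `w = (w', w'')` of `S`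
(split at `α_d`) with `v' ≠ w'`. -/
def CIset (r : ℕ → ℕ) (p α : ℕ) (S : Finset (List Bool)) (d : ℕ) :
    Finset (EGColor × Option (ℕ × Sym2 (List Bool))) :=
  ((S ×ˢ S).filter fun q =>
      q.1.take (alphaD (r d) α) ≠ q.2.take (alphaD (r d) α)).image
    fun q => (cColor r p (q.1.take (alphaD (r d) α)) (q.2.take (alphaD (r d) α)),
              eta (r (d-1)) (q.1.drop (alphaD (r d) α)) (q.2.drop (alphaD (r d) α)))

/-!
An element of `C_E^{(d-1)}` is `{x, y} = {v'', w''}` for `v, w ∈ S` that agree on their first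
`α_{d-1}` coordinates. Cutting `v` and `w` at `α_d ≤ α_{d-1}` instead gives
`{(u, x), (u, y)} ∈ C_E^{(d)}`, where `u` is their common segment between `α_d` and `α_{d-1}`;
dropping the first `α_{d-1} - α_d` coordinates undoes this, so the map is injective.
Since `r_{d-1}` divides `α_{d-1} - α_d`, the prefix `u` consists of whole blocks of resolution
`d-1` on which both vectors agree, while `x` and `y` have length `α - α_{d-1} ≤ r_{d-1}` and so
form a single block: hence `h_{d-1}` recovers `{x, y}`.
-/

namespace List

variable {β : Type*}

theorem toChunks_go_eq (n : ℕ) (l : List β) (acc₁ : Array β) (acc₂ : Array (List β))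
    (h₀ : acc₁ ≠ #[]) (hn : acc₁.size ≤ n) :
    toChunks.go n l acc₁ acc₂ =
      acc₂.toList ++ (acc₁.toList ++ l).take n :: ((acc₁.toList ++ l).drop n).toChunks n := by
  induction l generalizing acc₁ acc₂ with
  | nil =>
    have hlen : acc₁.toList.length ≤ n := by simpa using hn
    simp [toChunks.go, take_of_length_le hlen, drop_eq_nil_of_le hlen, toChunks]
  | cons x xs ih =>
    rw [toChunks.go]
    split_ifs with h
    · have hlen : acc₁.toList.length = n := by simpa using h
      obtain ⟨m, rfl⟩ := Nat.exists_eq_add_one_of_ne_zero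
        ((Array.size_pos_iff.mpr h₀).trans_le hn).ne'
      have hx : (x :: xs).toChunks (m + 1) =
          (x :: xs).take (m + 1) :: ((x :: xs).drop (m + 1)).toChunks (m + 1) := by
        simpa [toChunks] using ih #[x] #[] (by simp) (by simp)
      rw [ih _ _ (by simp) (by simp)]
      simp [take_append_of_le_length hlen.ge, drop_append_of_le_length hlen.ge,
        take_of_length_le hlen.le, drop_eq_nil_of_le hlen.le, hx]
    · rw [ih _ _ (by simp) (by simpa using Nat.lt_of_le_of_ne hn (by simpa using h))]
      simp

theorem toChunks_of_ne_nil {n : ℕ} (hn : 0 < n) {l : List β} (hl : l ≠ []) :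
    l.toChunks n = l.take n :: (l.drop n).toChunks n := by
  obtain ⟨x, xs, rfl⟩ := exists_cons_of_ne_nil hl
  obtain ⟨m, rfl⟩ := Nat.exists_eq_add_one_of_ne_zero hn.ne'
  simpa [toChunks] using toChunks_go_eq (m + 1) xs #[x] #[] (by simp) (by simp)

theorem toChunks_of_length_le {n : ℕ} {l : List β} (hl : l ≠ []) (hn : l.length ≤ n) :
    l.toChunks n = [l] := by
  rw [toChunks_of_ne_nil ((length_pos_iff.mpr hl).trans_le hn) hl, take_of_length_le hn,
    drop_eq_nil_of_le hn, toChunks]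

theorem toChunks_append_of_dvd {n : ℕ} (hn : 0 < n) {l₁ : List β} (hl₁ : n ∣ l₁.length)
    (l₂ : List β) : (l₁ ++ l₂).toChunks n = l₁.toChunks n ++ l₂.toChunks n := by
  obtain ⟨t, ht⟩ := hl₁
  induction t generalizing l₁ with
  | zero => simp_all [toChunks]
  | succ t ih =>
    have hl₁ : l₁ ≠ [] := by rw [← length_pos_iff, ht]; positivity
    have hle : n ≤ l₁.length := by rw [ht]; exact Nat.le_mul_of_pos_right n t.succ_pos
    rw [toChunks_of_ne_nil hn (by simp [hl₁]), toChunks_of_ne_nil hn hl₁,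
      take_append_of_le_length hle, drop_append_of_le_length hle,
      ih (by rw [length_drop, ht]; ring_nf; omega), cons_append]

theorem map_fst_find?_zipIdx (p : β → Bool) (l : List β) (k : ℕ) :
    ((l.zipIdx k).find? (p ·.1)).map Prod.fst = l.find? p := by
  induction l generalizing k with
  | nil => rfl
  | cons a l ih => by_cases h : p a <;> simp [h, ih]

end List

section Eta

variable {r : ℕ}

theorem blocksOf_append_of_dvd (hr : 0 < r) {m : List Bool} (hm : r ∣ m.length)
    (x : List Bool) :
    blocksOf r (m ++ x) = blocksOf r m ++ blocksOf r x :=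
  List.toChunks_append_of_dvd hr hm x

theorem blocksOf_of_length_le {x : List Bool} (hx : x ≠ []) (hxr : x.length ≤ r) :
    blocksOf r x = [x] :=
  List.toChunks_of_length_le hx hxr

theorem map_snd_eta (v w : List Bool) :
    (eta r v w).map Prod.snd =
      (((blocksOf r v).zip (blocksOf r w)).find? (fun q => q.1 != q.2)).map
        fun q => s(q.1, q.2) := by
  rw [eta, Option.map_map, List.find?_map,
    ← List.map_fst_find?_zipIdx (fun q => q.1 != q.2) ((blocksOf r v).zip (blocksOf r w)) 0,
    Option.map_map, Option.map_map]
  rfl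

theorem map_snd_eta_append (hr : 0 < r) {m : List Bool} (hm : r ∣ m.length) {x y : List Bool}
    (hxy : x ≠ y) (hlen : x.length = y.length) (hxr : x.length ≤ r) :
    (eta r (m ++ x) (m ++ y)).map Prod.snd = some s(x, y) := by
  have hx : x ≠ [] := by rintro rfl; exact hxy (List.eq_nil_of_length_eq_zero hlen.symm).symm
  have hy : y ≠ [] := by rintro rfl; exact hxy (List.eq_nil_of_length_eq_zero hlen)
  have hm_none : ((blocksOf r m).zip (blocksOf r m)).find? (fun q => q.1 != q.2) = none := by
    simp [List.zip_eq_zipWith, List.zipWith_self]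
  rw [map_snd_eta, blocksOf_append_of_dvd hr hm, blocksOf_append_of_dvd hr hm,
    List.zip_append rfl, List.find?_append, hm_none, blocksOf_of_length_le hx hxr,
    blocksOf_of_length_le hy (hlen ▸ hxr)]
  simp [hxy]

end Eta

section EmergingPairs

variable {β : Type*}

theorem injOn_map_append_left {n : ℕ} {s : Set (Sym2 (List β))} {u : Sym2 (List β) → List β}
    (hu : ∀ c ∈ s, (u c).length = n) : Set.InjOn (fun c => c.map (u c ++ ·)) s := by
  refine Set.LeftInvOn.injOn (f₁' := Sym2.map (List.drop n)) fun c hc => ?_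
  simp [Sym2.map_map, List.drop_left' (hu c hc)]

variable [DecidableEq β]

def emergingPairs (S : Finset (List β)) (k : ℕ) : Finset (Sym2 (List β)) :=
  ((S ×ˢ S).filter fun q => q.1.take k = q.2.take k ∧ q.1.drop k ≠ q.2.drop k).image
    fun q => s(q.1.drop k, q.2.drop k)

theorem CEset_eq_emergingPairs (r : ℕ → ℕ) (α : ℕ) (S : Finset (List Bool)) (d : ℕ) :
    CEset r α S d = emergingPairs S (alphaD (r d) α) :=
  rfl

variable {S : Finset (List β)} {k : ℕ}

theorem mem_emergingPairs {c : Sym2 (List β)} :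
    c ∈ emergingPairs S k ↔ ∃ v ∈ S, ∃ w ∈ S,
      v.take k = w.take k ∧ v.drop k ≠ w.drop k ∧ s(v.drop k, w.drop k) = c := by
  simp [emergingPairs, and_assoc]

theorem length_eq_of_mk_mem_emergingPairs {α : ℕ} (hS : ∀ v ∈ S, v.length = α)
    {x y : List β} (hxy : s(x, y) ∈ emergingPairs S k) :
    x ≠ y ∧ x.length = α - k ∧ y.length = α - k := by
  obtain ⟨v, hv, w, hw, -, hne, hvw⟩ := mem_emergingPairs.mp hxy
  rcases Sym2.eq_iff.mp hvw with ⟨rfl, rfl⟩ | ⟨rfl, rfl⟩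
  · simp [hne, hS v hv, hS w hw]
  · simp [hne.symm, hS v hv, hS w hw]

theorem exists_prefix_map_mem_emergingPairs {k₁ k₂ : ℕ} (hk : k₂ ≤ k₁)
    (hS : ∀ v ∈ S, k₁ ≤ v.length) {c : Sym2 (List β)} (hc : c ∈ emergingPairs S k₁) :
    ∃ u : List β, u.length = k₁ - k₂ ∧ c.map (u ++ ·) ∈ emergingPairs S k₂ := by
  obtain ⟨v, hv, w, hw, htake, hdrop, rfl⟩ := mem_emergingPairs.mp hc
  have hsplit (z : List β) : z.drop k₂ = (z.take k₁).drop k₂ ++ z.drop k₁ := by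
    rw [List.drop_take]
    nth_rw 1 [← List.take_append_drop (k₁ - k₂) (z.drop k₂)]
    rw [List.drop_drop, Nat.add_sub_cancel' hk]
  refine ⟨(v.take k₁).drop k₂, by simp [hS v hv],
    mem_emergingPairs.mpr ⟨v, hv, w, hw, ?_, ?_, ?_⟩⟩
  · rw [← min_eq_left hk, ← List.take_take, htake, List.take_take]
  · rw [hsplit v, hsplit w, htake]
    exact fun h => hdrop (List.append_cancel_left h)
  · rw [Sym2.map_mk, hsplit v, hsplit w, htake]

end EmergingPairs

theorem alphaD_lt {rd α : ℕ} (hα : 1 ≤ α) : alphaD rd α < α :=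
  (Nat.mul_div_le (α - 1) rd).trans_lt (by omega)

theorem sub_alphaD_le {rd : ℕ} (hrd : 0 < rd) (α : ℕ) : α - alphaD rd α ≤ rd := by
  have := Nat.mod_add_div (α - 1) rd
  have := Nat.mod_lt (α - 1) hrd
  rw [alphaD]
  omega

theorem dvd_alphaD (rd α : ℕ) : rd ∣ alphaD rd α :=
  Dvd.intro _ rfl

theorem alphaD_le_alphaD_of_dvd {r r' : ℕ} (hr : 0 < r) (h : r ∣ r') (α : ℕ) :
    alphaD r' α ≤ alphaD r α := by
  obtain ⟨c, hc⟩ := h.trans (dvd_alphaD r' α)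
  have : alphaD r' α ≤ α - 1 := Nat.mul_div_le (α - 1) r'
  rw [hc] at this ⊢
  exact Nat.mul_le_mul_left r ((Nat.le_div_iff_mul_le hr).mpr (by linarith))

theorem stmt9_general (p α : ℕ) (hα : 1 ≤ α) (r : ℕ → ℕ)
    (hrpos : ∀ e ≤ p + 1, 0 < r e) (hrdvd : ∀ e < p + 1, r e ∣ r (e + 1))
    (S : Finset (List Bool)) (hS : ∀ v ∈ S, v.length = α)
    (d : ℕ) (hd : 2 ≤ d) (hdp : d ≤ p) :
    ∃ ι : Sym2 (List Bool) → Sym2 (List Bool),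
      Set.InjOn ι (CEset r α S (d - 1)) ∧
      (∀ c ∈ CEset r α S (d - 1), ι c ∈ CEset r α S d) ∧
      (∀ x y : List Bool, s(x, y) ∈ CEset r α S (d - 1) →
        ∃ v : List Bool, v.length = alphaD (r (d - 1)) α - alphaD (r d) α ∧
          ι s(x, y) = s(v ++ x, v ++ y) ∧
          (eta (r (d - 1)) (v ++ x) (v ++ y)).map Prod.snd = some s(x, y)) ∧
      (CEset r α S (d - 1)).card ≤ (CEset r α S d).card := by
  have hr : 0 < r (d - 1) := hrpos _ (by omega)
  have hdvd : r (d - 1) ∣ r d :=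
    Nat.sub_add_cancel (by omega : 1 ≤ d) ▸ hrdvd (d - 1) (by omega)
  have hk : alphaD (r d) α ≤ alphaD (r (d - 1)) α := alphaD_le_alphaD_of_dvd hr hdvd α
  have hSk : ∀ v ∈ S, alphaD (r (d - 1)) α ≤ v.length :=
    fun v hv => (hS v hv).symm ▸ (alphaD_lt hα).le
  simp only [CEset_eq_emergingPairs]
  choose! u hu_len hu_mem using fun c (hc : c ∈ emergingPairs S _) =>
    exists_prefix_map_mem_emergingPairs hk hSk hc
  have hinj := injOn_map_append_left (s := ↑(emergingPairs S _)) fun c hc => hu_len c hc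
  refine ⟨fun c => c.map (u c ++ ·), hinj, hu_mem,
    fun x y hxy => ⟨u s(x, y), hu_len _ hxy, rfl, ?_⟩,
    Finset.card_le_card_of_injOn _ hu_mem hinj⟩
  obtain ⟨hne, hx, hy⟩ := length_eq_of_mk_mem_emergingPairs hS hxy
  have hu_dvd : r (d - 1) ∣ (u s(x, y)).length :=
    hu_len _ hxy ▸ Nat.dvd_sub (dvd_alphaD _ _) (hdvd.trans (dvd_alphaD _ _))
  exact map_snd_eta_append hr hu_dvd hne (hx.trans hy.symm) (hx ▸ sub_alphaD_le hr α)

/-- **Claim 5.2.** For `2 ≤ d ≤ p` there is an injective map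
`ι : C_E^{(d−1)} → C_E^{(d)}` sending each `{x, y} ∈ C_E^{(d−1)}` to a pair of the form
`{(v, x), (v, y)}` with `v ∈ {0,1}^{α_{d−1} − α_d}`, such that
`h_{d−1}(ι({x, y})) = {x, y}` (here `h_{d−1}` is the unordered pair of the first
differing blocks of resolution `d−1`, i.e. the second component of `η_{d−1}`).
In particular `|C_E^{(d−1)}| ≤ |C_E^{(d)}|`. -/
theorem stmt9 (p α : ℕ) (hp : 2 ≤ p) (hα : 1 ≤ α) (r : ℕ → ℕ) (hr0 : r 0 = 1)
    (hrpos : ∀ e ≤ p + 1, 0 < r e) (hrdvd : ∀ e < p + 1, r e ∣ r (e + 1))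
    (S : Finset (List Bool)) (hS : ∀ v ∈ S, v.length = α)
    (d : ℕ) (hd : 2 ≤ d) (hdp : d ≤ p) :
    ∃ ι : Sym2 (List Bool) → Sym2 (List Bool),
      Set.InjOn ι (CEset r α S (d - 1)) ∧
      (∀ c ∈ CEset r α S (d - 1), ι c ∈ CEset r α S d) ∧
      (∀ x y : List Bool, s(x, y) ∈ CEset r α S (d - 1) →
        ∃ v : List Bool, v.length = alphaD (r (d - 1)) α - alphaD (r d) α ∧
          ι s(x, y) = s(v ++ x, v ++ y) ∧
          (eta (r (d - 1)) (v ++ x) (v ++ y)).map Prod.snd = some s(x, y)) ∧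
      (CEset r α S (d - 1)).card ≤ (CEset r α S d).card :=
  stmt9_general p α hα r hrpos hrdvd S hS d hd hdp
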